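/- arXiv:1909.12151 — 10 statements merged into one kernel-verified Lean document; each statement's English description precedes it below -/
import Mathlib

section
/- Let G be a group and Λ, Ξ ⊆ G be approximate subgroups. Then Λ² ∩ Ξ² is an approximate subgroup. -/
/-!
`IsApproxSubgroup Λ` is Mathlib's `IsApproximateSubgroup K Λ` with the covering number `K`
forgotten, so the theorem is `IsApproximateSubgroup.pow_inter_pow` for `m = n = 2`. Its idea: cover
`Λ⁴` by `F³Λ` and `Ξ⁴` by `E³Ξ`; any point `c` of a nonempty `fΛ ∩ eΞ` satisfies
`fΛ ∩ eΞ ⊆ c (Λ⁻¹Λ ∩ Ξ⁻¹Ξ) = c (Λ² ∩ Ξ²)`, so finitely many such `c` cover `(Λ² ∩ Ξ²)²`.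
-/

open Pointwise

def IsApproxSubgroup {G : Type*} [Group G] (Λ : Set G) : Prop :=
  (1 : G) ∈ Λ ∧ Λ⁻¹ = Λ ∧ ∃ F : Set G, F.Finite ∧ Λ * Λ ⊆ F * Λ

def SetCommensurable {G : Type*} [Group G] (A B : Set G) : Prop :=
  ∃ F : Set G, F.Finite ∧ A ⊆ F * B ∧ B ⊆ F * A

section

variable {G : Type*} [Group G]

lemma exists_covBySMul_iff_exists_finite_mul {A B : Set G} :
    (∃ K, CovBySMul G K A B) ↔ ∃ F : Set G, F.Finite ∧ A ⊆ F * B := by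
  constructor
  · rintro ⟨K, F, -, hF⟩
    exact ⟨F, F.finite_toSet, by rwa [← smul_eq_mul]⟩
  · rintro ⟨F, hF, hAF⟩
    exact ⟨_, hF.toFinset, le_rfl, by rwa [hF.coe_toFinset, smul_eq_mul]⟩

lemma isApproxSubgroup_iff_exists_isApproximateSubgroup {Λ : Set G} :
    IsApproxSubgroup Λ ↔ ∃ K, IsApproximateSubgroup K Λ := by
  simp only [IsApproxSubgroup, ← sq, ← exists_covBySMul_iff_exists_finite_mul]
  exact ⟨fun ⟨h1, hinv, K, hK⟩ => ⟨K, h1, hinv, hK⟩, fun ⟨K, h1, hinv, hK⟩ => ⟨h1, hinv, K, hK⟩⟩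

end

theorem stmt1 {G : Type*} [Group G] (Λ Ξ : Set G)
    (hΛ : IsApproxSubgroup Λ) (hΞ : IsApproxSubgroup Ξ) :
    IsApproxSubgroup (Λ ^ 2 ∩ Ξ ^ 2) := by
  obtain ⟨K, hK⟩ := isApproxSubgroup_iff_exists_isApproximateSubgroup.mp hΛ
  obtain ⟨L, hL⟩ := isApproxSubgroup_iff_exists_isApproximateSubgroup.mp hΞ
  exact isApproxSubgroup_iff_exists_isApproximateSubgroup.mpr
    ⟨_, hK.pow_inter_pow hL le_rfl le_rfl⟩
end

section
/- Let G be a group and Λ, Ξ ⊆ G be approximate subgroups. Then for every k ≥ 2, the set Λ^(2k) ∩ Ξ^(2k) is commensurable to Λ² ∩ Ξ². In particular (Λᵏ ∩ Ξᵏ)_{k≥2} is a family of pairwise commensurable approximate subgroups. -/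
/-!
Each power `Λ ^ m` is covered by finitely many translates of `Λ`, and likewise for `Ξ`, so
`Λ ^ m ∩ Ξ ^ m` meets finitely many sets `a • Λ ∩ b • Ξ`. Any two points `x, y` of such a set
satisfy `x⁻¹ * y ∈ Λ⁻¹ * Λ ∩ Ξ⁻¹ * Ξ = Λ ^ 2 ∩ Ξ ^ 2`, so one point from each of them gives
finitely many translates of `Λ ^ 2 ∩ Ξ ^ 2` covering `Λ ^ m ∩ Ξ ^ m`; this is Mathlib's
`IsApproximateSubgroup.pow_inter_pow_covBySMul_sq_inter_sq`. For `m ≥ 2` the converse inclusion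
`Λ ^ 2 ∩ Ξ ^ 2 ⊆ Λ ^ m ∩ Ξ ^ m` is trivial, and commensurability is an equivalence relation.
-/

open Pointwise

section

variable {G : Type*} [Group G] {A B C : Set G} {K : ℝ}

lemma CovBySMul.exists_finite_subset_mul (h : CovBySMul G K A B) :
    ∃ F : Set G, F.Finite ∧ A ⊆ F * B := by
  obtain ⟨F, -, hAF⟩ := h
  exact ⟨F, F.finite_toSet, hAF⟩

lemma IsApproxSubgroup.exists_isApproximateSubgroup (hA : IsApproxSubgroup A) :
    ∃ K : ℝ, IsApproximateSubgroup K A := by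
  obtain ⟨hA₁, hAinv, F, hF, hAF⟩ := hA
  refine ⟨hF.toFinset.card, hA₁, hAinv, hF.toFinset, le_rfl, ?_⟩
  simpa [sq] using hAF

lemma IsApproximateSubgroup.isApproxSubgroup (hA : IsApproximateSubgroup K A) :
    IsApproxSubgroup A := by
  obtain ⟨F, hF, hAF⟩ := hA.sq_covBySMul.exists_finite_subset_mul
  exact ⟨hA.one_mem, hA.inv_eq_self, F, hF, by simpa [sq] using hAF⟩

namespace SetCommensurable

lemma of_covBySMul_of_subset (hAB : CovBySMul G K A B) (hBA : B ⊆ A) :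
    SetCommensurable A B := by
  obtain ⟨F, hF, hAF⟩ := hAB.exists_finite_subset_mul
  refine ⟨insert 1 F, hF.insert 1, hAF.trans ?_, ?_⟩
  · exact Set.mul_subset_mul_right (Set.subset_insert 1 F)
  · exact fun x hx => ⟨1, F.mem_insert 1, x, hBA hx, one_mul x⟩

lemma symm (h : SetCommensurable A B) : SetCommensurable B A := by
  obtain ⟨F, hF, hAB, hBA⟩ := h
  exact ⟨F, hF, hBA, hAB⟩

lemma trans (hAB : SetCommensurable A B) (hBC : SetCommensurable B C) :
    SetCommensurable A C := by
  obtain ⟨F, hF, hAF, hBF⟩ := hAB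
  obtain ⟨F', hF', hBF', hCF'⟩ := hBC
  refine ⟨F * F' ∪ F' * F, (hF.mul hF').union (hF'.mul hF), ?_, ?_⟩
  · calc A ⊆ F * B := hAF
      _ ⊆ F * (F' * C) := Set.mul_subset_mul_left hBF'
      _ ⊆ (F * F' ∪ F' * F) * C := by rw [← mul_assoc]; gcongr; exact Set.subset_union_left
  · calc C ⊆ F' * B := hCF'
      _ ⊆ F' * (F * A) := Set.mul_subset_mul_left hBF
      _ ⊆ (F * F' ∪ F' * F) * A := by rw [← mul_assoc]; gcongr; exact Set.subset_union_right

end SetCommensurable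

lemma IsApproximateSubgroup.setCommensurable_pow_inter_pow_sq_inter_sq {L : ℝ} {m : ℕ}
    (hA : IsApproximateSubgroup K A) (hB : IsApproximateSubgroup L B) (hm : 2 ≤ m) :
    SetCommensurable (A ^ m ∩ B ^ m) (A ^ 2 ∩ B ^ 2) :=
  .of_covBySMul_of_subset (hA.pow_inter_pow_covBySMul_sq_inter_sq hB hm hm) <|
    Set.inter_subset_inter (Set.pow_subset_pow_right hA.one_mem hm)
      (Set.pow_subset_pow_right hB.one_mem hm)

end

theorem stmt2 {G : Type*} [Group G] (Λ Ξ : Set G)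
    (hΛ : IsApproxSubgroup Λ) (hΞ : IsApproxSubgroup Ξ) :
    (∀ k : ℕ, 2 ≤ k → SetCommensurable (Λ ^ (2 * k) ∩ Ξ ^ (2 * k)) (Λ ^ 2 ∩ Ξ ^ 2)) ∧
    (∀ k l : ℕ, 2 ≤ k → 2 ≤ l →
      IsApproxSubgroup (Λ ^ k ∩ Ξ ^ k) ∧
      SetCommensurable (Λ ^ k ∩ Ξ ^ k) (Λ ^ l ∩ Ξ ^ l)) := by
  obtain ⟨K, hΛ⟩ := hΛ.exists_isApproximateSubgroup
  obtain ⟨L, hΞ⟩ := hΞ.exists_isApproximateSubgroup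
  refine ⟨fun k hk => hΛ.setCommensurable_pow_inter_pow_sq_inter_sq hΞ (by omega),
    fun k l hk hl => ⟨(hΛ.pow_inter_pow hΞ hk hk).isApproxSubgroup, ?_⟩⟩
  exact (hΛ.setCommensurable_pow_inter_pow_sq_inter_sq hΞ hk).trans
    (hΛ.setCommensurable_pow_inter_pow_sq_inter_sq hΞ hl).symm
end

section
/- Let G be a group, Λ ⊆ G an approximate subgroup, and H ≤ G a subgroup. If Λ ⊆ FH for some finite set F ⊆ G, then Λ² ∩ H is an approximate subgroup commensurable to Λ. -/
/-!
Only finitely many left cosets of `H` meet `Λ`, namely some of the `fH` with `f ∈ F`; a point `t ∈ Λ`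
in each of them gives a finite `S ⊆ Λ` such that every `x ∈ Λ` is `t · (t⁻¹x)` with
`t⁻¹x ∈ Λ⁻¹Λ ∩ H = Λ² ∩ H`, so `Λ ⊆ S (Λ² ∩ H)`. Conversely `Λ² ∩ H ⊆ Λ² ⊆ F₀Λ`, and
`(Λ² ∩ H)² ⊆ Λ⁴ ⊆ F'Λ ⊆ F'S (Λ² ∩ H)`.
-/

open Pointwise

section

variable {G : Type*} [Group G]

theorem IsApproxSubgroup.exists_pow_succ_subset {Λ : Set G} (hΛ : IsApproxSubgroup Λ) (n : ℕ) :
    ∃ F : Set G, F.Finite ∧ Λ ^ (n + 1) ⊆ F * Λ := by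
  obtain ⟨-, -, F₀, hF₀, hmul⟩ := hΛ
  induction n with
  | zero => exact ⟨{1}, Set.finite_singleton 1, by simp⟩
  | succ n ih =>
    obtain ⟨F, hF, hpow⟩ := ih
    refine ⟨F * F₀, hF.mul hF₀, ?_⟩
    calc Λ ^ (n + 1 + 1) = Λ ^ (n + 1) * Λ := pow_succ Λ (n + 1)
      _ ⊆ F * Λ * Λ := Set.mul_subset_mul_right hpow
      _ = F * (Λ * Λ) := mul_assoc F Λ Λ
      _ ⊆ F * (F₀ * Λ) := Set.mul_subset_mul_left hmul
      _ = F * F₀ * Λ := (mul_assoc F F₀ Λ).symm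

theorem exists_finite_subset_subset_mul_inv_mul_inter_subgroup {Λ F : Set G} {H : Subgroup G}
    (hF : F.Finite) (hsub : Λ ⊆ F * (H : Set G)) :
    ∃ S ⊆ Λ, S.Finite ∧ Λ ⊆ S * (Λ⁻¹ * Λ ∩ (H : Set G)) := by
  let π : G → G ⧸ H := QuotientGroup.mk
  have hcosets : (π '' Λ).Finite := by
    refine (hF.image π).subset ?_
    rintro _ ⟨x, hx, rfl⟩
    obtain ⟨f, hf, h, hh, rfl⟩ := hsub hx
    exact ⟨f, hf, QuotientGroup.eq.mpr (by simpa using hh)⟩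
  obtain ⟨S, hSΛ, hS, hSΛ'⟩ :=
    Set.exists_subset_image_finite_and.mp ⟨π '' Λ, subset_rfl, hcosets, rfl⟩
  refine ⟨S, hSΛ, hS, fun x hx => ?_⟩
  obtain ⟨t, ht, htx⟩ : π x ∈ π '' S := hSΛ' ▸ Set.mem_image_of_mem π hx
  refine ⟨t, ht, t⁻¹ * x, ⟨⟨t⁻¹, ?_, x, hx, rfl⟩, QuotientGroup.eq.mp htx⟩, mul_inv_cancel_left t x⟩
  exact Set.inv_mem_inv.mpr (hSΛ ht)

theorem inv_sq_inter_subgroup {Λ : Set G} (hinv : Λ⁻¹ = Λ) (H : Subgroup G) :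
    (Λ ^ 2 ∩ (H : Set G))⁻¹ = Λ ^ 2 ∩ (H : Set G) := by
  rw [Set.inter_inv, ← inv_pow, hinv, inv_coe_set]

end

theorem stmt3 {G : Type*} [Group G] (Λ : Set G) (hΛ : IsApproxSubgroup Λ)
    (H : Subgroup G) (F : Set G) (hF : F.Finite) (hsub : Λ ⊆ F * (H : Set G)) :
    IsApproxSubgroup (Λ ^ 2 ∩ (H : Set G)) ∧
    SetCommensurable (Λ ^ 2 ∩ (H : Set G)) Λ := by
  obtain ⟨F₃, hF₃, hΛ4⟩ := hΛ.exists_pow_succ_subset 3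
  obtain ⟨hone, hinv, F₀, hF₀, hmul⟩ := hΛ
  set Ξ : Set G := Λ ^ 2 ∩ (H : Set G)
  obtain ⟨S, -, hS, hΛS⟩ := exists_finite_subset_subset_mul_inv_mul_inter_subgroup hF hsub
  rw [hinv, ← sq] at hΛS
  have hΞΛ : Ξ ⊆ F₀ * Λ := Set.inter_subset_left.trans ((sq Λ).trans_subset hmul)
  have hΞΞ : Ξ * Ξ ⊆ F₃ * S * Ξ :=
    calc Ξ * Ξ ⊆ Λ ^ 2 * Λ ^ 2 := Set.mul_subset_mul Set.inter_subset_left Set.inter_subset_left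
      _ = Λ ^ (3 + 1) := (pow_add Λ 2 2).symm
      _ ⊆ F₃ * Λ := hΛ4
      _ ⊆ F₃ * (S * Ξ) := Set.mul_subset_mul_left hΛS
      _ = F₃ * S * Ξ := (mul_assoc F₃ S Ξ).symm
  refine ⟨⟨⟨Set.one_mem_pow hone, H.one_mem⟩, inv_sq_inter_subgroup hinv H,
    F₃ * S, hF₃.mul hS, hΞΞ⟩, S ∪ F₀, hS.union hF₀, ?_, ?_⟩
  · exact hΞΛ.trans (Set.mul_subset_mul_right Set.subset_union_right)
  · exact hΛS.trans (Set.mul_subset_mul_right Set.subset_union_left)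
end

section
/- Let V be a finite-dimensional real vector space and Λ ⊆ V a symmetric subset (Λ = −Λ, 0 ∈ Λ) such that Λ + Λ is compactly commensurable to Λ (i.e. Λ + Λ ⊆ Λ + K for some compact K). Then there exists a vector subspace W ⊆ V that is compactly commensurable to Λ, i.e. Λ ⊆ W + K₁ and W ⊆ Λ + K₂ for compact sets K₁, K₂. -/
/-!
Let `d = infDist · Λ`. From `Λ + Λ ⊆ Λ + closedBall 0 C` the function `d` is quasi-subadditive,
`d (x + y) ≤ d x + d y + C`; it is also even and 1-Lipschitz. By Fekete's lemma
`p x = lim_{s → ∞} d (s • x) / s` exists, and it is a continuous seminorm with `p ≤ d + C`.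
Take `W = ker p`. As `p ≤ C` on `Λ` and `p` is a norm on a complement of `W`, every point of `Λ`
is within bounded distance of `W`. Conversely, since `p = 0` on the compact unit sphere of `W`,
`d` grows sublinearly on `W`, say `d x ≤ ‖x‖ / 2 + M`. For `x ∈ W` and `l ∈ Λ` nearly closest
to `x`, the vector `x - l` lies near `W` and has norm about `d x`, so
`d x ≤ d (x - l) + C ≤ d x / 2 + const`, which bounds `d` on `W`.
-/

open Pointwise Filter Topology Metric

lemma LipschitzWith.sub_le_norm_sub {V : Type*} [SeminormedAddCommGroup V] {f : V → ℝ}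
    (hf : LipschitzWith 1 f) (x y : V) : f x - f y ≤ ‖x - y‖ := by
  simpa [Real.norm_eq_abs] using (le_abs_self _).trans (hf.norm_sub_le x y)

section RadialGrowth

variable {V : Type*} [NormedAddCommGroup V] [NormedSpace ℝ V] {f : V → ℝ} {C : ℝ}

/-- Junk (`limUnder`) unless the limit exists, which it does for quasi-subadditive Lipschitz `f`
(`tendsto_apply_smul_div_radialGrowth`). -/
noncomputable def radialGrowth (f : V → ℝ) (x : V) : ℝ :=
  limUnder atTop fun s : ℝ => f (s • x) / s

lemma subadditive_apply_natCast_smul_add (hadd : ∀ x y, f (x + y) ≤ f x + f y + C) (x : V) :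
    Subadditive fun n : ℕ => f ((n : ℝ) • x) + C := fun m n => by
  have := hadd ((m : ℝ) • x) ((n : ℝ) • x)
  push_cast [add_smul]
  linarith

lemma bddBelow_apply_natCast_smul_add_div (hlip : LipschitzWith 1 f) (x : V) :
    BddBelow (Set.range fun n : ℕ => (f ((n : ℝ) • x) + C) / n) := by
  refine ⟨-|f 0 + C| - ‖x‖, ?_⟩
  rintro _ ⟨n, rfl⟩
  rcases Nat.eq_zero_or_pos n with rfl | hn
  · simp only [CharP.cast_eq_zero, div_zero]
    linarith [abs_nonneg (f 0 + C), norm_nonneg x]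
  have hn' : (1 : ℝ) ≤ n := Nat.one_le_cast.2 hn
  have hlow : f 0 - n * ‖x‖ ≤ f ((n : ℝ) • x) := by
    have := hlip.sub_le_norm_sub 0 ((n : ℝ) • x)
    rw [zero_sub, norm_neg, norm_smul, Real.norm_natCast] at this
    linarith
  have habs : -|f 0 + C| ≤ (f 0 + C) / n :=
    calc -|f 0 + C| ≤ -|(f 0 + C) / n| := by
          rw [abs_div, Nat.abs_cast]; exact neg_le_neg (div_le_self (abs_nonneg _) hn')
      _ ≤ (f 0 + C) / n := neg_abs_le _
  calc -|f 0 + C| - ‖x‖ ≤ (f 0 + C) / n - ‖x‖ := by linarith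
    _ = (f 0 + C - n * ‖x‖) / n := by field_simp
    _ ≤ (f ((n : ℝ) • x) + C) / n := by gcongr; linarith

lemma tendsto_apply_natCast_smul_div (hadd : ∀ x y, f (x + y) ≤ f x + f y + C)
    (hlip : LipschitzWith 1 f) (x : V) :
    Tendsto (fun n : ℕ => f ((n : ℝ) • x) / n) atTop
      (𝓝 (subadditive_apply_natCast_smul_add hadd x).lim) := by
  have h := ((subadditive_apply_natCast_smul_add hadd x).tendsto_lim
    (bddBelow_apply_natCast_smul_add_div hlip x)).sub (tendsto_const_div_atTop_nhds_zero_nat C)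
  rw [sub_zero] at h
  refine h.congr fun n => ?_
  rw [add_div, add_sub_cancel_right]

lemma tendsto_apply_smul_div_radialGrowth (hadd : ∀ x y, f (x + y) ≤ f x + f y + C)
    (hlip : LipschitzWith 1 f) (x : V) :
    Tendsto (fun s : ℝ => f (s • x) / s) atTop (𝓝 (radialGrowth f x)) := by
  refine tendsto_nhds_limUnder ⟨(subadditive_apply_natCast_smul_add hadd x).lim, ?_⟩
  -- Fekete along the integers, then compare `s` with `⌊s⌋₊`, which moves `s • x` by at most `‖x‖`.
  have hfloor : Tendsto (fun s : ℝ => f ((⌊s⌋₊ : ℝ) • x) / s) atTop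
      (𝓝 (subadditive_apply_natCast_smul_add hadd x).lim) := by
    have h := ((tendsto_apply_natCast_smul_div hadd hlip x).comp tendsto_nat_floor_atTop).mul
      tendsto_nat_floor_div_atTop
    rw [mul_one] at h
    refine h.congr' ?_
    filter_upwards [eventually_ge_atTop 1] with s hs
    have : (⌊s⌋₊ : ℝ) ≠ 0 := Nat.cast_ne_zero.2 (Nat.floor_pos.2 hs).ne'
    simp only [Function.comp_apply, div_mul_div_cancel₀ this]
  refine hfloor.congr_dist (squeeze_zero' (Eventually.of_forall fun _ => dist_nonneg) ?_
    ((tendsto_const_nhds (x := ‖x‖)).div_atTop tendsto_id))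
  filter_upwards [eventually_gt_atTop 0] with s hs
  rw [Real.dist_eq, ← sub_div, abs_div, abs_of_pos hs, id]
  gcongr
  calc |f ((⌊s⌋₊ : ℝ) • x) - f (s • x)| ≤ ‖(⌊s⌋₊ : ℝ) • x - s • x‖ := by
        simpa [Real.norm_eq_abs] using hlip.norm_sub_le _ _
    _ = |s - ⌊s⌋₊| * ‖x‖ := by rw [← sub_smul, norm_smul, Real.norm_eq_abs, abs_sub_comm]
    _ ≤ 1 * ‖x‖ := by
        gcongr
        rw [abs_of_nonneg (by linarith [Nat.floor_le hs.le])]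
        linarith [Nat.lt_floor_add_one s]
    _ = ‖x‖ := one_mul _

lemma radialGrowth_le_apply_add (hadd : ∀ x y, f (x + y) ≤ f x + f y + C) (hlip : LipschitzWith 1 f)
    (x : V) : radialGrowth f x ≤ f x + C := by
  have h := (tendsto_apply_smul_div_radialGrowth hadd hlip x).comp tendsto_natCast_atTop_atTop
  rw [tendsto_nhds_unique h (tendsto_apply_natCast_smul_div hadd hlip x)]
  simpa using (subadditive_apply_natCast_smul_add hadd x).lim_le_div
    (bddBelow_apply_natCast_smul_add_div hlip x) one_ne_zero

lemma radialGrowth_le_norm (hadd : ∀ x y, f (x + y) ≤ f x + f y + C) (hlip : LipschitzWith 1 f)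
    (x : V) : radialGrowth f x ≤ ‖x‖ := by
  have h : Tendsto (fun s : ℝ => f 0 / s + ‖x‖) atTop (𝓝 (0 + ‖x‖)) :=
    (tendsto_const_nhds.div_atTop tendsto_id).add tendsto_const_nhds
  rw [zero_add] at h
  refine le_of_tendsto_of_tendsto (tendsto_apply_smul_div_radialGrowth hadd hlip x) h ?_
  filter_upwards [eventually_gt_atTop 0] with s hs
  have := hlip.sub_le_norm_sub (s • x) 0
  rw [sub_zero, norm_smul, Real.norm_of_nonneg hs.le] at this
  rw [div_add' _ _ _ hs.ne', mul_comm]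
  gcongr
  linarith

lemma radialGrowth_add_le (hadd : ∀ x y, f (x + y) ≤ f x + f y + C) (hlip : LipschitzWith 1 f)
    (x y : V) : radialGrowth f (x + y) ≤ radialGrowth f x + radialGrowth f y := by
  have h := ((tendsto_apply_smul_div_radialGrowth hadd hlip x).add
    (tendsto_apply_smul_div_radialGrowth hadd hlip y)).add
    ((tendsto_const_nhds (x := C)).div_atTop tendsto_id)
  rw [add_zero] at h
  refine le_of_tendsto_of_tendsto (tendsto_apply_smul_div_radialGrowth hadd hlip (x + y)) h ?_
  filter_upwards [eventually_gt_atTop 0] with s hs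
  rw [smul_add, id, ← add_div, ← add_div]
  gcongr
  exact hadd _ _

lemma radialGrowth_smul_of_pos (hadd : ∀ x y, f (x + y) ≤ f x + f y + C)
    (hlip : LipschitzWith 1 f) {t : ℝ} (ht : 0 < t) (x : V) :
    radialGrowth f (t • x) = t * radialGrowth f x := by
  refine tendsto_nhds_unique (tendsto_apply_smul_div_radialGrowth hadd hlip (t • x)) ?_
  refine (((tendsto_apply_smul_div_radialGrowth hadd hlip x).comp
    (tendsto_id.atTop_mul_const ht)).const_mul t).congr' ?_
  filter_upwards [eventually_gt_atTop 0] with s hs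
  simp only [Function.comp_apply, id, smul_smul]
  field_simp

lemma radialGrowth_zero (hadd : ∀ x y, f (x + y) ≤ f x + f y + C) (hlip : LipschitzWith 1 f) :
    radialGrowth f (0 : V) = 0 := by
  refine tendsto_nhds_unique (tendsto_apply_smul_div_radialGrowth hadd hlip 0) ?_
  simpa only [smul_zero, id] using (tendsto_const_nhds (x := f 0)).div_atTop tendsto_id

lemma radialGrowth_neg (heven : ∀ x, f (-x) = f x) (x : V) :
    radialGrowth f (-x) = radialGrowth f x := by
  simp only [radialGrowth, smul_neg, heven]

/-- Junk (`limUnder`) unless the limit exists, which it does for quasi-subadditive Lipschitz `f`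
(`tendsto_apply_smul_div_radialGrowth`). -/
noncomputable def radialGrowthSeminorm (hadd : ∀ x y, f (x + y) ≤ f x + f y + C)
    (hlip : LipschitzWith 1 f) (heven : ∀ x, f (-x) = f x) : Seminorm ℝ V :=
  Seminorm.of (radialGrowth f) (radialGrowth_add_le hadd hlip) fun t x => by
    rcases lt_trichotomy t 0 with ht | rfl | ht
    · rw [← neg_smul_neg, radialGrowth_smul_of_pos hadd hlip (neg_pos.2 ht),
        radialGrowth_neg heven, Real.norm_of_nonpos ht.le]
    · rw [zero_smul, radialGrowth_zero hadd hlip, norm_zero, zero_mul]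
    · rw [radialGrowth_smul_of_pos hadd hlip ht, Real.norm_of_nonneg ht.le]

lemma continuous_radialGrowthSeminorm (hadd : ∀ x y, f (x + y) ≤ f x + f y + C)
    (hlip : LipschitzWith 1 f) (heven : ∀ x, f (-x) = f x) :
    Continuous (radialGrowthSeminorm hadd hlip heven) :=
  Seminorm.continuous_of_le (q := normSeminorm ℝ V) continuous_norm
    (radialGrowth_le_norm hadd hlip)

lemma eventually_forall_div_lt_of_radialGrowth_eq_zero (hadd : ∀ x y, f (x + y) ≤ f x + f y + C)
    (hlip : LipschitzWith 1 f) {K : Set V} (hK : IsCompact K)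
    (hK0 : ∀ v ∈ K, radialGrowth f v = 0) {ε : ℝ} (hε : 0 < ε) :
    ∀ᶠ s in atTop, ∀ v ∈ K, f (s • v) / s < ε := by
  have hloc : ∀ v ∈ K, ∀ᶠ q : ℝ × V in atTop ×ˢ 𝓝 v, f (q.1 • q.2) / q.1 < ε := by
    intro v hv
    have hv' : ∀ᶠ s in atTop, f (s • v) / s < ε / 2 :=
      (tendsto_apply_smul_div_radialGrowth hadd hlip v).eventually
        (gt_mem_nhds (by linarith [hK0 v hv]))
    filter_upwards [(hv'.and (eventually_gt_atTop 0)).prod_mk (ball_mem_nhds v (half_pos hε))]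
      with ⟨s, w⟩ ⟨⟨hsv, hs⟩, hw⟩
    have hsw := hlip.sub_le_norm_sub (s • w) (s • v)
    rw [← smul_sub, norm_smul, Real.norm_of_nonneg hs.le, ← dist_eq_norm] at hsw
    calc f (s • w) / s ≤ (f (s • v) + s * dist w v) / s := by gcongr; linarith
      _ = f (s • v) / s + dist w v := by field_simp
      _ < ε := by linarith [mem_ball.1 hw]
  -- The functions `v ↦ f (s • v) / s` are uniformly 1-Lipschitz, so pointwise smallness spreads
  -- to neighbourhoods and, by compactness, to all of `K`.
  have hunif : ∀ᶠ q : ℝ × V in atTop ×ˢ 𝓝ˢ K, f (q.1 • q.2) / q.1 < ε :=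
    hK.mem_prod_nhdsSet_of_forall hloc
  exact hunif.curry.mono fun _ h => h.self_of_nhdsSet

lemma exists_le_mul_norm_add_of_radialGrowth_eq_zero [FiniteDimensional ℝ V]
    (hadd : ∀ x y, f (x + y) ≤ f x + f y + C) (hlip : LipschitzWith 1 f) {W : Submodule ℝ V}
    (hW : ∀ x ∈ W, radialGrowth f x = 0) {ε : ℝ} (hε : 0 < ε) :
    ∃ M, ∀ x ∈ W, f x ≤ ε * ‖x‖ + M := by
  have hK : IsCompact ((W : Set V) ∩ sphere 0 1) :=
    (isCompact_sphere 0 1).inter_left W.closed_of_finiteDimensional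
  obtain ⟨S, hS⟩ := eventually_atTop.1 <|
    eventually_forall_div_lt_of_radialGrowth_eq_zero hadd hlip hK (fun v hv => hW v hv.1) hε
  refine ⟨|f 0| + max S 1, fun x hx => ?_⟩
  rcases lt_or_ge ‖x‖ (max S 1) with hsmall | hlarge
  · have := hlip.sub_le_norm_sub x 0
    rw [sub_zero] at this
    linarith [le_abs_self (f 0), mul_nonneg hε.le (norm_nonneg x)]
  · have hxpos : 0 < ‖x‖ := one_pos.trans_le ((le_max_right _ _).trans hlarge)
    have hv : ‖x‖⁻¹ • x ∈ (W : Set V) ∩ sphere 0 1 :=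
      ⟨W.smul_mem _ hx, by simp [norm_smul, hxpos.ne']⟩
    have := hS ‖x‖ (le_trans (le_max_left _ _) hlarge) _ hv
    rw [smul_smul, mul_inv_cancel₀ hxpos.ne', one_smul, div_lt_iff₀ hxpos] at this
    linarith [abs_nonneg (f 0), le_max_right S 1]

end RadialGrowth

namespace Seminorm

def ker {𝕜 E : Type*} [SeminormedRing 𝕜] [AddCommGroup E] [Module 𝕜 E] (p : Seminorm 𝕜 E) :
    Submodule 𝕜 E where
  carrier := {x | p x = 0}
  zero_mem' := map_zero p
  add_mem' {x y} hx hy := le_antisymm ((map_add_le_add p x y).trans_eq (by rw [hx, hy, add_zero]))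
    (apply_nonneg p _)
  smul_mem' c x (hx : p x = 0) := show p (c • x) = 0 by rw [map_smul_eq_mul, hx, mul_zero]

variable {E : Type*} [NormedAddCommGroup E] [NormedSpace ℝ E]

lemma exists_norm_le_mul_of_ker_eq_bot [FiniteDimensional ℝ E] (p : Seminorm ℝ E)
    (hp : Continuous p) (hker : p.ker = ⊥) : ∃ c, ∀ x, ‖x‖ ≤ c * p x := by
  have hpos : ∀ x ≠ 0, 0 < p x := fun x hx =>
    (apply_nonneg p x).lt_of_ne fun h => hx <| (Submodule.mem_bot ℝ).1 (hker ▸ h.symm)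
  obtain ⟨c, hc⟩ := (isCompact_sphere (0 : E) 1).exists_bound_of_continuousOn
    (hp.continuousOn.inv₀ fun x hx => (hpos x (ne_zero_of_mem_unit_sphere ⟨x, hx⟩)).ne')
  refine ⟨c, fun x => ?_⟩
  rcases eq_or_ne x 0 with rfl | hx
  · simp
  have hxpos := norm_pos_iff.2 hx
  have hval : ‖(p (‖x‖⁻¹ • x))⁻¹‖ = ‖x‖ / p x := by
    simp only [map_smul_eq_mul, norm_inv, norm_mul, norm_norm,
      Real.norm_of_nonneg (apply_nonneg p x), mul_inv, inv_inv, div_eq_mul_inv]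
  have := hc (‖x‖⁻¹ • x) (by simp [norm_smul, hxpos.ne'])
  rwa [Pi.inv_apply, hval, div_le_iff₀ (hpos x hx)] at this

lemma exists_norm_sub_le_mul [FiniteDimensional ℝ E] (p : Seminorm ℝ E) (hp : Continuous p) :
    ∃ c, 0 ≤ c ∧ ∀ x, ∃ w ∈ p.ker, ‖x - w‖ ≤ c * p x := by
  obtain ⟨U, hU⟩ := Submodule.exists_isCompl p.ker
  have hkerU : (p.comp U.subtype).ker = ⊥ := by
    refine (Submodule.eq_bot_iff _).2 fun u hu => ?_
    have hu' : (u : E) ∈ p.ker ⊓ U := ⟨hu, u.2⟩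
    rw [hU.inf_eq_bot, Submodule.mem_bot] at hu'
    exact Subtype.ext hu'
  obtain ⟨c, hc⟩ := (p.comp U.subtype).exists_norm_le_mul_of_ker_eq_bot
    (hp.comp continuous_subtype_val) hkerU
  refine ⟨max c 0, le_max_right _ _, fun x => ?_⟩
  obtain ⟨w, hw, u, hu, rfl⟩ := Submodule.mem_sup.1 (hU.sup_eq_top ▸ Submodule.mem_top (x := x))
  refine ⟨w, hw, ?_⟩
  have hpu : p u ≤ p (w + u) := by
    calc p u = p (w + u - w) := by rw [add_sub_cancel_left]
      _ ≤ p (w + u) + p w := map_sub_le_add p _ _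
      _ = p (w + u) := by rw [show p w = 0 from hw, add_zero]
  calc ‖w + u - w‖ = ‖(⟨u, hu⟩ : U)‖ := by rw [add_sub_cancel_left]; rfl
    _ ≤ c * p u := hc _
    _ ≤ max c 0 * p (w + u) :=
      mul_le_mul (le_max_left _ _) hpu (apply_nonneg p _) (le_max_right _ _)

end Seminorm

section ApproximateSubgroup

variable {V : Type*} [NormedAddCommGroup V] {Λ : Set V} {C : ℝ}

lemma infDist_add_le_of_add_subset (hΛ : Λ.Nonempty) (hC : Λ + Λ ⊆ Λ + closedBall 0 C)
    (x y : V) : infDist (x + y) Λ ≤ infDist x Λ + infDist y Λ + C := by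
  have key : ∀ a ∈ Λ, ∀ b ∈ Λ, infDist (x + y) Λ ≤ dist x a + dist y b + C := by
    intro a ha b hb
    obtain ⟨z, hz, k, hk, hzk⟩ := hC (Set.add_mem_add ha hb)
    calc infDist (x + y) Λ ≤ dist (x + y) z := infDist_le_dist_of_mem hz
      _ ≤ dist (x + y) (a + b) + dist (a + b) z := dist_triangle _ _ _
      _ ≤ dist x a + dist y b + C := by
        gcongr
        · exact dist_add_add_le _ _ _ _
        · rwa [← hzk, dist_eq_norm, add_sub_cancel_left, ← mem_closedBall_zero_iff]
  have hx : ∀ a ∈ Λ, infDist (x + y) Λ - dist x a - C ≤ infDist y Λ := fun a ha =>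
    (le_infDist hΛ).2 fun b hb => by linarith [key a ha b hb]
  have hxy : infDist (x + y) Λ - infDist y Λ - C ≤ infDist x Λ :=
    (le_infDist hΛ).2 fun a ha => by linarith [hx a ha]
  linarith

lemma infDist_neg_of_neg_eq (hsym : -Λ = Λ) (x : V) : infDist (-x) Λ = infDist x Λ := by
  rw [infDist, infEDist_neg, hsym, infDist]

lemma infDist_le_of_sublinear_on_submodule [NormedSpace ℝ V] (hΛ : Λ.Nonempty)
    (hadd : ∀ x y, infDist (x + y) Λ ≤ infDist x Λ + infDist y Λ + C) {W : Submodule ℝ V}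
    {ρ M : ℝ} (hΛW : ∀ l ∈ Λ, ∃ w ∈ W, ‖l - w‖ ≤ ρ) (hW : ∀ x ∈ W, infDist x Λ ≤ 2⁻¹ * ‖x‖ + M)
    {x : V} (hx : x ∈ W) : infDist x Λ ≤ 2 * (M + C) + 3 * ρ + 1 := by
  obtain ⟨l, hl, hxl⟩ := (infDist_lt_iff hΛ).1 (lt_add_one (infDist x Λ))
  obtain ⟨w, hw, hlw⟩ := hΛW l hl
  have h1 : infDist x Λ ≤ infDist (x - l) Λ + C := by
    simpa [infDist_zero_of_mem hl] using hadd (x - l) l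
  have h2 : infDist (x - l) Λ ≤ infDist (x - w) Λ + ‖l - w‖ := by
    simpa [dist_sub_left, dist_eq_norm, norm_sub_rev w l] using
      infDist_le_infDist_add_dist (s := Λ) (x := x - l) (y := x - w)
  have h3 := hW (x - w) (W.sub_mem hx hw)
  have h4 : ‖x - w‖ ≤ ‖x - l‖ + ‖l - w‖ := norm_sub_le_norm_sub_add_norm_sub _ _ _
  rw [dist_eq_norm] at hxl
  linarith

lemma subset_add_closedBall_zero {A B : Set V} {r : ℝ} (h : ∀ a ∈ A, ∃ b ∈ B, ‖a - b‖ ≤ r) :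
    A ⊆ B + closedBall 0 r := fun a ha =>
  let ⟨b, hb, hab⟩ := h a ha
  ⟨b, hb, a - b, mem_closedBall_zero_iff.2 hab, add_sub_cancel _ _⟩

end ApproximateSubgroup

theorem stmt4 {V : Type*} [NormedAddCommGroup V] [NormedSpace ℝ V]
    [FiniteDimensional ℝ V] (Λ : Set V) (h0 : (0 : V) ∈ Λ) (hsym : -Λ = Λ)
    (hcc : ∃ K : Set V, IsCompact K ∧ Λ + Λ ⊆ Λ + K) :
    ∃ (W : Submodule ℝ V) (K₁ K₂ : Set V), IsCompact K₁ ∧ IsCompact K₂ ∧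
      Λ ⊆ (W : Set V) + K₁ ∧ (W : Set V) ⊆ Λ + K₂ := by
  obtain ⟨K, hK, hΛK⟩ := hcc
  obtain ⟨C, hKC⟩ := hK.isBounded.subset_closedBall 0
  have hΛ : Λ.Nonempty := ⟨0, h0⟩
  have hadd := infDist_add_le_of_add_subset hΛ (hΛK.trans (Set.add_subset_add_left hKC))
  have hlip := lipschitz_infDist_pt Λ
  set p := radialGrowthSeminorm hadd hlip (infDist_neg_of_neg_eq hsym)
  obtain ⟨c, hc0, hc⟩ := p.exists_norm_sub_le_mul (continuous_radialGrowthSeminorm hadd hlip _)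
  have hΛW : ∀ l ∈ Λ, ∃ w ∈ p.ker, ‖l - w‖ ≤ c * C := fun l hl => by
    obtain ⟨w, hw, hlw⟩ := hc l
    have hpl : p l ≤ C := by
      have := radialGrowth_le_apply_add hadd hlip l
      rwa [infDist_zero_of_mem hl, zero_add] at this
    exact ⟨w, hw, hlw.trans (mul_le_mul_of_nonneg_left hpl hc0)⟩
  obtain ⟨M, hM⟩ := exists_le_mul_norm_add_of_radialGrowth_eq_zero hadd hlip
    (W := p.ker) (fun x hx => hx) (by norm_num : (0 : ℝ) < 2⁻¹)
  refine ⟨p.ker, _, _, isCompact_closedBall 0 (c * C),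
    isCompact_closedBall 0 (2 * (M + C) + 3 * (c * C) + 2), subset_add_closedBall_zero hΛW,
    subset_add_closedBall_zero fun x hx => ?_⟩
  obtain ⟨l, hl, hxl⟩ := (infDist_lt_iff hΛ).1
    ((infDist_le_of_sublinear_on_submodule hΛ hadd hΛW hM hx).trans_lt (lt_add_one _))
  exact ⟨l, hl, by rw [← dist_eq_norm]; linarith⟩
end

section
/- Let Λ ⊆ GLₙ(ℝ) be an approximate subgroup and suppose there exist lattices Γ₁ ⊆ Γ₂ in ℝⁿ (discrete cocompact subgroups) such that λ(Γ₁) ⊆ Γ₂ for all λ ∈ Λ. Then |det| takes finitely many values on Λ; more precisely, the set {|det(λ)| : λ ∈ Λ} is finite. -/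
/-!
If `f` maps the lattice `L₁` into the lattice `L₂`, then in a `ℤ`-basis `b₁` of `L₁` and a
`ℤ`-basis `b₂` of `L₂` the matrix of `f` has integer entries, so `det f = c * k` with
`c = b₁.det b₂ ≠ 0` depending only on the lattices and `k ∈ ℤ`. Since `Λ` is symmetric, both
`det l` and `(det l)⁻¹ = det l⁻¹` lie in the discrete group `c ℤ`, which forces
`|c| ≤ |det l| ≤ |c|⁻¹`; only finitely many points of `c ℤ` lie in that range.
-/

open Pointwise

open AddSubgroup Module

theorem Matrix.det_mem_subring {ι R : Type*} [Fintype ι] [DecidableEq ι] [CommRing R]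
    (S : Subring R) {A : Matrix ι ι R} (hA : ∀ i j, A i j ∈ S) : A.det ∈ S := by
  rw [A.det_apply]
  refine S.sum_mem fun σ _ ↦ ?_
  rw [Units.smul_def]
  exact S.zsmul_mem (S.prod_mem fun i _ ↦ hA _ _) _

theorem abs_le_abs_of_mem_zmultiples {c y : ℝ} (hy : y ∈ zmultiples c) (hy₀ : y ≠ 0) :
    |c| ≤ |y| := by
  obtain ⟨k, rfl⟩ := mem_zmultiples_iff.mp hy
  have hk : k ≠ 0 := by rintro rfl; simp at hy₀
  rw [zsmul_eq_mul, abs_mul]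
  exact le_mul_of_one_le_left (abs_nonneg c) (by exact_mod_cast Int.one_le_abs hk)

theorem finite_setOf_mem_zmultiples_and_inv_mem {c : ℝ} (hc : c ≠ 0) :
    {x : ℝ | x ∈ zmultiples c ∧ x⁻¹ ∈ zmultiples c}.Finite := by
  refine (Metric.finite_isBounded_inter_isClosed (K := Metric.closedBall 0 |c|⁻¹)
    (SetLike.isDiscrete_iff_discreteTopology.mpr inferInstance) Metric.isBounded_closedBall
    (isClosed_of_discrete (H := zmultiples c))).subset ?_
  rintro x ⟨hx, hx_inv⟩
  refine ⟨?_, hx⟩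
  rw [mem_closedBall_zero_iff, Real.norm_eq_abs]
  rcases eq_or_ne x 0 with rfl | hx₀
  · simp
  · have := abs_le_abs_of_mem_zmultiples hx_inv (inv_ne_zero hx₀)
    rw [abs_inv] at this
    exact (le_inv_comm₀ (abs_pos.mpr hc) (abs_pos.mpr hx₀)).mp this

theorem IsZLattice.exists_det_mem_zmultiples {E : Type*} [NormedAddCommGroup E]
    [NormedSpace ℝ E] [FiniteDimensional ℝ E] (L₁ L₂ : Submodule ℤ E)
    [DiscreteTopology L₁] [IsZLattice ℝ L₁] [DiscreteTopology L₂] [IsZLattice ℝ L₂] :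
    ∃ c : ℝ, c ≠ 0 ∧ ∀ f : E →ₗ[ℝ] E, (∀ x ∈ L₁, f x ∈ L₂) →
      LinearMap.det f ∈ zmultiples c := by
  let b₁ := (Free.chooseBasis ℤ L₁).ofZLatticeBasis ℝ L₁
  let b₂' := Free.chooseBasis ℤ L₂
  -- reindexed so that `b₂` has the index type of `b₁` and `b₁.det b₂` makes sense
  let b₂ := (b₂'.reindex ((b₂'.ofZLatticeBasis ℝ L₂).indexEquiv b₁)).ofZLatticeBasis ℝ L₂
  refine ⟨b₁.det b₂, (b₁.isUnit_det b₂).ne_zero, fun f hf ↦ ?_⟩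
  have hdet : LinearMap.det f = b₁.det b₂ * b₂.det (f ∘ b₁) := by
    rw [Basis.det_apply, Basis.det_apply, ← Matrix.det_mul, Basis.toMatrix_mul_toMatrix,
      ← Basis.det_apply, Basis.det_comp, Basis.det_self, mul_one]
  have hint : b₂.det (f ∘ b₁) ∈ (Int.castRingHom ℝ).range := by
    refine Matrix.det_mem_subring _ fun i j ↦ ?_
    have hj : f (b₁ j) ∈ L₂ := hf _ (by simp [b₁])
    exact ⟨_, (Basis.ofZLatticeBasis_repr_apply ℝ L₂ _ ⟨_, hj⟩ i).symm⟩
  obtain ⟨k, hk⟩ := hint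
  exact mem_zmultiples_iff.mpr ⟨k, by rw [hdet, ← hk, eq_intCast, zsmul_eq_mul, mul_comm]⟩

theorem Matrix.GeneralLinearGroup.det_inv {n K : Type*} [Fintype n] [DecidableEq n] [Field K]
    (l : GL n K) : ((l⁻¹ : GL n K) : Matrix n n K).det = (l : Matrix n n K).det⁻¹ := by
  rw [Matrix.coe_units_inv, Matrix.det_nonsing_inv, Ring.inverse_eq_inv']

theorem stmt9 {n : ℕ} (Λ : Set (GL (Fin n) ℝ)) (hΛ : IsApproxSubgroup Λ)
    (Γ₁ Γ₂ : AddSubgroup (Fin n → ℝ)) (hsub : Γ₁ ≤ Γ₂)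
    (hdisc₁ : DiscreteTopology Γ₁) (hdisc₂ : DiscreteTopology Γ₂)
    (hfull : Submodule.span ℝ (Γ₁ : Set (Fin n → ℝ)) = ⊤)
    (hmap : ∀ l ∈ Λ, ∀ v ∈ Γ₁,
      (l : Matrix (Fin n) (Fin n) ℝ).mulVec v ∈ Γ₂) :
    ((fun l : GL (Fin n) ℝ => |(l : Matrix (Fin n) (Fin n) ℝ).det|) '' Λ).Finite := by
  have : DiscreteTopology Γ₁.toIntSubmodule := hdisc₁
  have : DiscreteTopology Γ₂.toIntSubmodule := hdisc₂
  have : IsZLattice ℝ Γ₁.toIntSubmodule := ⟨hfull⟩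
  have : IsZLattice ℝ Γ₂.toIntSubmodule := ⟨eq_top_mono (Submodule.span_mono hsub) hfull⟩
  obtain ⟨c, hc, hdet⟩ :=
    IsZLattice.exists_det_mem_zmultiples Γ₁.toIntSubmodule Γ₂.toIntSubmodule
  have hdet_mem : ∀ l ∈ Λ, (l : Matrix (Fin n) (Fin n) ℝ).det ∈ zmultiples c := fun l hl ↦
    LinearMap.det_toLin' (l : Matrix (Fin n) (Fin n) ℝ) ▸ hdet _ (hmap l hl)
  refine ((finite_setOf_mem_zmultiples_and_inv_mem hc).image abs).subset ?_
  rintro _ ⟨l, hl, rfl⟩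
  have hl_inv : l⁻¹ ∈ Λ := hΛ.2.1 ▸ Set.inv_mem_inv.mpr hl
  exact ⟨_, ⟨hdet_mem l hl, Matrix.GeneralLinearGroup.det_inv l ▸ hdet_mem _ hl_inv⟩, rfl⟩
end

section
/- Let G be a locally compact group and Λ ⊆ G a uniform approximate lattice admitting a good model f : Λ^∞ → H into a locally compact group H. Then the map γ ↦ (γ, f(γ)) embeds Λ^∞ as a discrete subgroup of G × closure(f(Λ^∞)). (Discreteness part: there is a neighbourhood of the identity in G × H meeting the image only in the identity.) -/
open Pointwise

open Topology

theorem exists_nhds_one_graph_eq_one_of_isDiscrete {Γ G H : Type*} [MulOneClass Γ]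
    [MulOneClass G] [TopologicalSpace G] [One H] [TopologicalSpace H]
    {Λ : Set G} (hΛ : IsDiscrete Λ) (h1 : (1 : G) ∈ Λ) (ι : Γ →* G)
    (hι : Function.Injective ι) (f : Γ → H) {V : Set H} (hV : V ∈ 𝓝 1)
    (hVΛ : ∀ γ, f γ ∈ V → ι γ ∈ Λ) :
    ∃ U ∈ 𝓝 ((1, 1) : G × H), ∀ γ, (ι γ, f γ) ∈ U → γ = 1 := by
  obtain ⟨W, hW, hWΛ⟩ := nhds_inter_eq_singleton_of_mem_discrete hΛ h1
  refine ⟨W ×ˢ V, prod_mem_nhds hW hV, fun γ hγ => ?_⟩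
  have hγ1 : ι γ ∈ W ∩ Λ := ⟨hγ.1, hVΛ γ hγ.2⟩
  rw [hWΛ, Set.mem_singleton_iff] at hγ1
  exact hι (hγ1.trans ι.map_one.symm)

theorem stmt12_general {G H : Type*}
    [Group G] [TopologicalSpace G]
    [Group H] [TopologicalSpace H]
    (Λ : Set G) (hΛ : IsApproxSubgroup Λ) (hdisc : DiscreteTopology Λ)
    (f : Subgroup.closure Λ →* H)
    (hV : ∃ V ∈ nhds (1 : H), ∀ γ : Subgroup.closure Λ, f γ ∈ V → (γ : G) ∈ Λ) :
    Function.Injective (fun γ : Subgroup.closure Λ => ((γ : G), f γ)) ∧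
    ∃ U ∈ nhds ((1, 1) : G × H),
      ∀ γ : Subgroup.closure Λ, ((γ : G), f γ) ∈ U → γ = 1 := by
  obtain ⟨V, hV, hVΛ⟩ := hV
  refine ⟨fun a b h => Subtype.val_injective (congrArg Prod.fst h), ?_⟩
  exact exists_nhds_one_graph_eq_one_of_isDiscrete (isDiscrete_iff_discreteTopology.mpr hdisc)
    hΛ.1 (Subgroup.closure Λ).subtype Subtype.val_injective f hV hVΛ

theorem stmt12 {G H : Type*}
    [Group G] [TopologicalSpace G] [IsTopologicalGroup G] [LocallyCompactSpace G]
    [Group H] [TopologicalSpace H] [IsTopologicalGroup H] [LocallyCompactSpace H]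
    (Λ : Set G) (hΛ : IsApproxSubgroup Λ) (hdisc : DiscreteTopology Λ)
    (hcocpt : ∃ K : Set G, IsCompact K ∧ Set.univ ⊆ K * Λ)
    (f : Subgroup.closure Λ →* H)
    (hrel : IsCompact (closure (f '' {γ : Subgroup.closure Λ | (γ : G) ∈ Λ})))
    (hV : ∃ V ∈ nhds (1 : H), ∀ γ : Subgroup.closure Λ, f γ ∈ V → (γ : G) ∈ Λ) :
    Function.Injective (fun γ : Subgroup.closure Λ => ((γ : G), f γ)) ∧
    ∃ U ∈ nhds ((1, 1) : G × H),
      ∀ γ : Subgroup.closure Λ, ((γ : G), f γ) ∈ U → γ = 1 :=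
  stmt12_general Λ hΛ hdisc f hV
end

section
/- Let G be a group, Λ ⊆ G a symmetric subset containing the identity, and f : Λ^∞ → H a good model for Λ (f(Λ) relatively compact in the locally compact group H and f⁻¹(V) ⊆ Λ for some identity neighbourhood V). Then Λ is an approximate subgroup of G. -/
open Pointwise Set Topology

/-!
The image `f '' (Λ * Λ)` lies in the compact set `K * K`, where `K` is the closure of `f '' Λ`.
A subset of a compact set of a topological group is covered by finitely many translates of `V`
centred at its own points, so `f '' (Λ * Λ) ⊆ f '' F * V` for a finite `F`; pulling back along `f`
gives `Λ * Λ ⊆ F * f ⁻¹' V ⊆ F * Λ`.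
-/

section TopologicalGroup

variable {H : Type*} [Group H] [TopologicalSpace H] [IsTopologicalGroup H]

theorem IsCompact.exists_finite_subset_mul_of_subset {K A V : Set H} (hK : IsCompact K)
    (hAK : A ⊆ K) (hV : V ∈ 𝓝 1) : ∃ t ⊆ A, t.Finite ∧ A ⊆ t * V := by
  set W := interior V ∩ (interior V)⁻¹
  have hWopen : IsOpen W := isOpen_interior.inter isOpen_interior.inv
  have hW : W ∈ 𝓝 1 := hWopen.mem_nhds ⟨mem_interior_iff_mem_nhds.2 hV,
    by simpa using mem_interior_iff_mem_nhds.2 hV⟩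
  have hclosure : closure A ⊆ ⋃ a ∈ A, (a * ·) '' W := by
    rw [iUnion_mul_left_image]
    exact closure_subset_mul_right_of_mem_nhds_one_of_inv A hW
      fun x hx => ⟨hx.2, by simpa using hx.1⟩
  -- `closure A` is compact because topological groups are R₁ spaces.
  obtain ⟨t, htA, ht, hcover⟩ := (hK.closure_of_subset hAK).elim_finite_subcover_image
    (fun a _ => isOpenMap_mul_left a W hWopen) hclosure
  refine ⟨t, htA, ht, subset_closure.trans (hcover.trans ?_)⟩
  rw [iUnion_mul_left_image]
  exact mul_subset_mul_left (inter_subset_left.trans interior_subset)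

theorem MonoidHom.exists_finite_mul_preimage_of_image_subset_isCompact {Γ : Type*} [Group Γ]
    (f : Γ →* H) {A : Set Γ} {K V : Set H} (hK : IsCompact K) (hAK : f '' A ⊆ K)
    (hV : V ∈ 𝓝 1) : ∃ F : Set Γ, F.Finite ∧ A ⊆ F * f ⁻¹' V := by
  obtain ⟨F, -, hF, hcover⟩ :=
    exists_subset_image_finite_and.1 (hK.exists_finite_subset_mul_of_subset hAK hV)
  refine ⟨F, hF, fun x hx => ?_⟩
  obtain ⟨_, ⟨y, hy, rfl⟩, v, hv, hyv⟩ := hcover (mem_image_of_mem f hx)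
  refine ⟨y, hy, y⁻¹ * x, ?_, mul_inv_cancel_left y x⟩
  rwa [mem_preimage, map_mul, map_inv, ← hyv, inv_mul_cancel_left]

end TopologicalGroup

theorem stmt13_general {G H : Type*} [Group G]
    [Group H] [TopologicalSpace H] [IsTopologicalGroup H]
    (Λ : Set G) (h1 : (1 : G) ∈ Λ) (hsym : Λ⁻¹ = Λ)
    (f : Subgroup.closure Λ →* H)
    (hrel : IsCompact (closure (f '' {γ : Subgroup.closure Λ | (γ : G) ∈ Λ})))
    (hV : ∃ V ∈ nhds (1 : H), ∀ γ : Subgroup.closure Λ, f γ ∈ V → (γ : G) ∈ Λ) :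
    IsApproxSubgroup Λ := by
  obtain ⟨V, hV, hVΛ⟩ := hV
  set ι := (Subgroup.closure Λ).subtype
  have hΛ : ι '' (ι ⁻¹' Λ) = Λ :=
    image_preimage_eq_of_subset (by simp [ι, Subgroup.subset_closure])
  have hsq : f '' (ι ⁻¹' Λ * ι ⁻¹' Λ) ⊆ closure (f '' (ι ⁻¹' Λ)) * closure (f '' (ι ⁻¹' Λ)) := by
    rw [image_mul]
    exact mul_subset_mul subset_closure subset_closure
  obtain ⟨F, hF, hcover⟩ :=
    f.exists_finite_mul_preimage_of_image_subset_isCompact (hrel.mul hrel) hsq hV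
  refine ⟨h1, hsym, ι '' F, hF.image ι, ?_⟩
  calc Λ * Λ = ι '' (ι ⁻¹' Λ * ι ⁻¹' Λ) := by rw [image_mul, hΛ]
    _ ⊆ ι '' (F * ι ⁻¹' Λ) := image_mono (hcover.trans (mul_subset_mul_left hVΛ))
    _ = ι '' F * Λ := by rw [image_mul, hΛ]

theorem stmt13 {G H : Type*} [Group G]
    [Group H] [TopologicalSpace H] [IsTopologicalGroup H] [LocallyCompactSpace H]
    (Λ : Set G) (h1 : (1 : G) ∈ Λ) (hsym : Λ⁻¹ = Λ)
    (f : Subgroup.closure Λ →* H)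
    (hrel : IsCompact (closure (f '' {γ : Subgroup.closure Λ | (γ : G) ∈ Λ})))
    (hV : ∃ V ∈ nhds (1 : H), ∀ γ : Subgroup.closure Λ, f γ ∈ V → (γ : G) ∈ Λ) :
    IsApproxSubgroup Λ :=
  stmt13_general Λ h1 hsym f hrel hV
end

section
/- Let N be a connected, simply connected nilpotent Lie group and Γ ⊆ N a finitely generated subgroup. For g in the commensurator of Γ (i.e. gΓg⁻¹ is commensurable to Γ as groups), the ℚ-span of log(Γ) in the Lie algebra of N satisfies ℚ·log(gΓg⁻¹) = ℚ·log(Γ), i.e. Ad-type conjugation by g preserves the rational Lie algebra ℚ log(Γ). -/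
/-!
Commensurable subgroups have the same ℚ-span of logarithms: every element of one has a nonzero
power in the other (finite relative index), and `log (x ^ n) = n • log x` with `n` invertible
in ℚ puts `log x` in the span of the other.
-/

section LogSpan

variable {N L : Type*} [Group N] [AddCommGroup L] [Module ℚ L] (log : N → L)

lemma log_mem_span_of_pow_mem (hpow : ∀ (x : N) (n : ℕ), log (x ^ n) = (n : ℚ) • log x)
    {S : Set N} {x : N} {n : ℕ} (hn : n ≠ 0) (hx : x ^ n ∈ S) :
    log x ∈ Submodule.span ℚ (log '' S) := by
  have hlog : (n : ℚ) • log x ∈ Submodule.span ℚ (log '' S) :=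
    hpow x n ▸ Submodule.subset_span ⟨x ^ n, hx, rfl⟩
  exact (Submodule.smul_mem_iff _ (Nat.cast_ne_zero.mpr hn)).mp hlog

lemma span_log_le_of_relIndex_ne_zero
    (hpow : ∀ (x : N) (n : ℕ), log (x ^ n) = (n : ℚ) • log x)
    {H K : Subgroup N} (h : H.relIndex K ≠ 0) :
    Submodule.span ℚ (log '' (K : Set N)) ≤ Submodule.span ℚ (log '' (H : Set N)) := by
  rw [Submodule.span_le]
  rintro _ ⟨x, hx, rfl⟩
  obtain ⟨n, hn, -, hxn⟩ := Subgroup.exists_pow_mem_of_relIndex_ne_zero h hx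
  exact log_mem_span_of_pow_mem log hpow hn.ne' hxn.1

lemma Subgroup.Commensurable.span_log_eq
    (hpow : ∀ (x : N) (n : ℕ), log (x ^ n) = (n : ℚ) • log x)
    {H K : Subgroup N} (h : H.Commensurable K) :
    Submodule.span ℚ (log '' (H : Set N)) = Submodule.span ℚ (log '' (K : Set N)) :=
  le_antisymm (span_log_le_of_relIndex_ne_zero log hpow h.2)
    (span_log_le_of_relIndex_ne_zero log hpow h.1)

end LogSpan

theorem stmt15_general {N : Type*} [Group N] {L : Type*} [AddCommGroup L] [Module ℚ L]
    (log : N → L)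
    (hpow : ∀ (x : N) (n : ℕ), log (x ^ n) = (n : ℚ) • log x)
    (Γ : Subgroup N) (g : N)
    (hcomm : Subgroup.Commensurable (Γ.map (MulAut.conj g).toMonoidHom) Γ) :
    Submodule.span ℚ (log '' (Γ.map (MulAut.conj g).toMonoidHom : Set N)) =
      Submodule.span ℚ (log '' (Γ : Set N)) :=
  hcomm.span_log_eq log hpow

theorem stmt15 {N : Type*} [Group N] {L : Type*} [AddCommGroup L] [Module ℚ L]
    (log : N → L) (hbij : Function.Bijective log)
    (hpow : ∀ (x : N) (n : ℕ), log (x ^ n) = (n : ℚ) • log x)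
    (Γ : Subgroup N) (hfg : Γ.FG) (g : N)
    (hcomm : Subgroup.Commensurable (Γ.map (MulAut.conj g).toMonoidHom) Γ) :
    Submodule.span ℚ (log '' (Γ.map (MulAut.conj g).toMonoidHom : Set N)) =
      Submodule.span ℚ (log '' (Γ : Set N)) :=
  stmt15_general log hpow Γ g hcomm
end

section
/- Let G be a group, H ⊴ Λ^∞ a normal subgroup of the group generated by an approximate subgroup Λ, and p : Λ^∞ → Λ^∞/H the quotient map. Suppose the set of commutators {[p(λ₁), p(λ₂)] : λ₁, λ₂ ∈ Λ} is finite and p(Λ^∞) is generated by a finite subset of p(Λ). Then p(Λ) is commensurable (within Λ^∞/H) to p(Λ²) ∩ Z(Λ^∞/H), where Z denotes the center. -/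
/-!
If `S` generates the group, the fibres of `γ ↦ (⁅s, γ⁆)_{s ∈ S}` lie in cosets of the centre, since
`⁅s, g⁆ = ⁅s, a⁆` says exactly that `g⁻¹ a` commutes with `s`. For a finite `S ⊆ p(Λ)` and finitely many
commutators in `p(Λ)`, this map takes finitely many values on `p(Λ)`, so `p(Λ)` is covered by finitely many
translates `g (p(Λ)⁻¹ p(Λ) ∩ Z) = g (p(Λ)² ∩ Z)`. Conversely `p(Λ)² ∩ Z ⊆ p(Λ)² ⊆ p(F) p(Λ)`.
-/

open Pointwise

open scoped commutatorElement

section Commutators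

variable {Q : Type*} [Group Q]

theorem commutatorElement_eq_commutatorElement_iff_commute {s g a : Q} :
    ⁅s, g⁆ = ⁅s, a⁆ ↔ Commute s (g⁻¹ * a) := by
  rw [← Commute.inv_left_iff, Commute, SemiconjBy, commutatorElement_def, commutatorElement_def]
  constructor
  · intro h
    calc s⁻¹ * (g⁻¹ * a) = g⁻¹ * (s⁻¹ * (s * g * s⁻¹ * g⁻¹)) * a := by group
      _ = g⁻¹ * (s⁻¹ * (s * a * s⁻¹ * a⁻¹)) * a := by rw [h]
      _ = g⁻¹ * a * s⁻¹ := by group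
  · intro h
    calc s * g * s⁻¹ * g⁻¹ = s * g * (s⁻¹ * (g⁻¹ * a)) * a⁻¹ := by group
      _ = s * g * (g⁻¹ * a * s⁻¹) * a⁻¹ := by rw [h]
      _ = s * a * s⁻¹ * a⁻¹ := by group

theorem inv_mul_mem_center_of_commutatorElement_eq {S : Set Q} (hS : Subgroup.closure S = ⊤)
    {g a : Q} (h : ∀ s ∈ S, ⁅s, g⁆ = ⁅s, a⁆) : g⁻¹ * a ∈ Subgroup.center Q := by
  have hcent : g⁻¹ * a ∈ Subgroup.centralizer S := Subgroup.mem_centralizer_iff.2 fun s hs =>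
    commutatorElement_eq_commutatorElement_iff_commute.1 (h s hs)
  rwa [← Subgroup.centralizer_closure, hS, Subgroup.coe_top, Subgroup.centralizer_univ] at hcent

def commutatorProfile (S : Set Q) (γ : Q) : S → Q := fun s => ⁅(s : Q), γ⁆

theorem finite_commutatorProfile_image {S A : Set Q} (hSfin : S.Finite) (hSA : S ⊆ A)
    (hcomm : (Set.image2 (⁅·, ·⁆) A A).Finite) : (commutatorProfile S '' A).Finite := by
  have : Finite S := hSfin.to_subtype
  refine (Set.Finite.pi' fun _ : S => hcomm).subset ?_
  rintro _ ⟨γ, hγ, rfl⟩ s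
  exact Set.mem_image2_of_mem (hSA s.2) hγ

theorem subset_mul_inv_mul_inter_center {S A : Set Q} (hS : Subgroup.closure S = ⊤)
    (hfin : (commutatorProfile S '' A).Finite) :
    ∃ F ⊆ A, F.Finite ∧ A ⊆ F * (A⁻¹ * A ∩ Subgroup.center Q) := by
  obtain ⟨F, hFA, hFfin, hcover⟩ := Set.exists_subset_image_finite_and
    (p := fun t => commutatorProfile S '' A ⊆ t) |>.1 ⟨_, subset_rfl, hfin, subset_rfl⟩
  refine ⟨F, hFA, hFfin, fun a ha => ?_⟩
  obtain ⟨g, hg, hga⟩ := hcover ⟨a, ha, rfl⟩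
  have hcen : g⁻¹ * a ∈ Subgroup.center Q := inv_mul_mem_center_of_commutatorElement_eq hS
    fun s hs => congrFun hga ⟨s, hs⟩
  have hsq : g⁻¹ * a ∈ A⁻¹ * A := Set.mul_mem_mul (Set.inv_mem_inv.2 (hFA hg)) ha
  exact ⟨g, hg, g⁻¹ * a, ⟨hsq, hcen⟩, mul_inv_cancel_left g a⟩

end Commutators

section ApproxSubgroup

variable {G Q : Type*} [Group G] [Group Q] {Λ : Set G}

theorem IsApproxSubgroup.image (hΛ : IsApproxSubgroup Λ) (φ : G →* Q) :
    IsApproxSubgroup (φ '' Λ) := by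
  obtain ⟨h1, hinv, F, hFfin, hF⟩ := hΛ
  refine ⟨⟨1, h1, map_one φ⟩, by rw [← Set.image_inv, hinv], φ '' F, hFfin.image φ, ?_⟩
  rw [← Set.image_mul, ← Set.image_mul]
  exact Set.image_mono hF

theorem preimage_subtype_mul {K : Subgroup G} {A B : Set G} (hA : A ⊆ K) (hB : B ⊆ K) :
    ((↑) ⁻¹' (A * B) : Set K) = (↑) ⁻¹' A * (↑) ⁻¹' B := by
  have hrange : ∀ {C : Set G}, C ⊆ K → C ⊆ Set.range K.subtype := fun hC => by
    rwa [← MonoidHom.coe_range, K.range_subtype]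
  simpa only [Subgroup.coe_subtype] using
    Set.preimage_mul K.subtype K.subtype_injective (hrange hA) (hrange hB)

theorem IsApproxSubgroup.preimage_subtype (hΛ : IsApproxSubgroup Λ) {K : Subgroup G}
    (hΛK : Λ ⊆ K) : IsApproxSubgroup ((↑) ⁻¹' Λ : Set K) := by
  obtain ⟨h1, hinv, F, hFfin, hF⟩ := hΛ
  refine ⟨h1, ?_, (↑) ⁻¹' F, hFfin.preimage Subtype.val_injective.injOn, ?_⟩
  · ext x
    rw [Set.mem_inv, Set.mem_preimage, Set.mem_preimage, Subgroup.coe_inv, ← Set.mem_inv, hinv]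
  rintro x ⟨a, ha, b, hb, rfl⟩
  obtain ⟨f, hf, l, hl, hfl⟩ := hF (Set.mul_mem_mul ha hb)
  refine ⟨a * b * ⟨l, hΛK hl⟩⁻¹, ?_, ⟨l, hΛK hl⟩, hl, inv_mul_cancel_right _ _⟩
  simpa [← hfl] using hf

end ApproxSubgroup

theorem IsApproxSubgroup.setCommensurable_mul_inter_center {Q : Type*} [Group Q] {A : Set Q}
    (hA : IsApproxSubgroup A) (hcomm : (Set.image2 (⁅·, ·⁆) A A).Finite)
    (hgen : ∃ S ⊆ A, S.Finite ∧ Subgroup.closure S = ⊤) :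
    SetCommensurable A (A * A ∩ Subgroup.center Q) := by
  obtain ⟨-, hinv, F, hFfin, hF⟩ := hA
  obtain ⟨S, hSA, hSfin, hS⟩ := hgen
  obtain ⟨F', -, hF'fin, hcover⟩ := subset_mul_inv_mul_inter_center hS
    (finite_commutatorProfile_image hSfin hSA hcomm)
  rw [hinv] at hcover
  refine ⟨F' ∪ F, hF'fin.union hFfin, hcover.trans ?_, Set.inter_subset_left.trans (hF.trans ?_)⟩
  · exact Set.mul_subset_mul_right Set.subset_union_left
  · exact Set.mul_subset_mul_right Set.subset_union_right

theorem stmt16 {G : Type*} [Group G] (Λ : Set G) (hΛ : IsApproxSubgroup Λ)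
    (H : Subgroup ↥(Subgroup.closure Λ)) [H.Normal]
    (hcomm : {z : ↥(Subgroup.closure Λ) ⧸ H |
        ∃ a ∈ (QuotientGroup.mk' H) '' {x : ↥(Subgroup.closure Λ) | (x : G) ∈ Λ},
        ∃ b ∈ (QuotientGroup.mk' H) '' {x : ↥(Subgroup.closure Λ) | (x : G) ∈ Λ},
        z = a * b * a⁻¹ * b⁻¹}.Finite)
    (hgen : ∃ S : Set (↥(Subgroup.closure Λ) ⧸ H),
        S ⊆ (QuotientGroup.mk' H) '' {x : ↥(Subgroup.closure Λ) | (x : G) ∈ Λ} ∧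
        S.Finite ∧ Subgroup.closure S = ⊤) :
    SetCommensurable
      ((QuotientGroup.mk' H) '' {x : ↥(Subgroup.closure Λ) | (x : G) ∈ Λ})
      (((QuotientGroup.mk' H) '' {x : ↥(Subgroup.closure Λ) | (x : G) ∈ Λ * Λ}) ∩
        (Subgroup.center (↥(Subgroup.closure Λ) ⧸ H) : Set _)) := by
  have hΛK : Λ ⊆ Subgroup.closure Λ := Subgroup.subset_closure
  have hA := (hΛ.preimage_subtype hΛK).image (QuotientGroup.mk' H)
  set A := QuotientGroup.mk' H '' {x : ↥(Subgroup.closure Λ) | (x : G) ∈ Λ}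
  have hcomm' : (Set.image2 (⁅·, ·⁆) A A).Finite := by
    convert hcomm using 1
    ext z
    simp only [Set.mem_image2, Set.mem_ofPred_eq, commutatorElement_def, eq_comm (a := z)]
  have hsq : {x : ↥(Subgroup.closure Λ) | (x : G) ∈ Λ * Λ} = (↑) ⁻¹' Λ * (↑) ⁻¹' Λ :=
    preimage_subtype_mul hΛK hΛK
  rw [hsq, Set.image_mul]
  exact hA.setCommensurable_mul_inter_center hcomm' hgen
end

section
/- Let G be a topological group, Λ ⊆ G an approximate subgroup, and H ≤ G a closed connected subgroup compactly commensurable to Λ (Λ ⊆ KH and H ⊆ KΛ for some compact symmetric K). Then there is a compact set K' ⊆ G such that the subgroup Λ^∞ generated by Λ is generated by Λ² ∩ K'. In particular, if Λ is discrete, Λ^∞ is finitely generated. -/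
open Pointwise Topology

/-!
Every `λ ∈ Λ` lies in `K h` for some `h ∈ H`. Since `H` is connected, it is generated by
`H ∩ V` for a compact symmetric identity neighbourhood `V`, so `h` is a product
`vᵣ ⋯ v₁` of elements of `V`. Lifting each partial product `hᵢ` back to `λᵢ ∈ Λ ∩ K hᵢ`
(possible as `H ⊆ K Λ`), consecutive quotients `λᵢ₊₁ λᵢ⁻¹` lie in `Λ² ∩ K V K`, and `λ` is
their product with some element of `Λ ∩ K`.
-/

namespace Subgroup

variable {G : Type*} [Group G]

theorem closure_mul_inter_le (Λ S : Set G) : closure (Λ * Λ ∩ S) ≤ closure Λ := by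
  rw [closure_le]
  rintro _ ⟨⟨a, ha, b, hb, rfl⟩, -⟩
  exact mul_mem (subset_closure ha) (subset_closure hb)

theorem closure_le_closure_mul_inter_of_commensurable {Λ K V : Set G} {H : Subgroup G}
    (hone : (1 : G) ∈ Λ) (hΛ : Λ⁻¹ = Λ) (hK : K⁻¹ = K)
    (hΛH : Λ ⊆ K * H) (hHΛ : (H : Set G) ⊆ K * Λ)
    (hVH : V ⊆ H) (hV : V⁻¹ = V) (hgen : H ≤ closure V) :
    closure Λ ≤ closure (Λ * Λ ∩ (K * V * K ∪ K)) := by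
  set Γ := closure (Λ * Λ ∩ (K * V * K ∪ K))
  let P : G → Prop := fun y => y ∈ H → ∀ μ ∈ Λ, μ * y⁻¹ ∈ K → μ ∈ Γ
  have base : P 1 := fun _ μ hμ hμK =>
    subset_closure ⟨⟨μ, hμ, 1, hone, mul_one μ⟩, Or.inr (by simpa using hμK)⟩
  have step : ∀ x ∈ V, ∀ y, P y → P (x * y) := by
    intro x hx y hy hxy μ hμ hμK
    have hyH : y ∈ H := by simpa using H.mul_mem (H.inv_mem (hVH hx)) hxy
    obtain ⟨k, hk, μ', hμ', rfl⟩ := hHΛ hyH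
    have hμ'Γ : μ' ∈ Γ := hy hyH μ' hμ' (by
      rw [← hK]
      simpa using hk)
    have hquot : μ * μ'⁻¹ ∈ Λ * Λ ∩ (K * V * K ∪ K) :=
      ⟨Set.mul_mem_mul hμ (hΛ ▸ Set.inv_mem_inv.2 hμ'),
        Or.inl ⟨_, Set.mul_mem_mul hμK hx, k, hk, by group⟩⟩
    simpa using mul_mem (subset_closure hquot) hμ'Γ
  have hP : ∀ y ∈ closure V, P y := fun y hy =>
    closure_induction_left (p := fun y _ => P y) base (fun x hx y _ => step x hx y)
      (fun x hx y _ => step x⁻¹ (hV ▸ Set.inv_mem_inv.2 hx) y) hy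
  rw [closure_le]
  intro μ hμ
  obtain ⟨k, hk, h, hh, rfl⟩ := hΛH hμ
  exact hP h (hgen hh) hh _ hμ (by simpa using hk)

variable [TopologicalSpace G] [IsTopologicalGroup G]

theorem closure_eq_top_of_mem_nhds_one [PreconnectedSpace G] {U : Set G} (hU : U ∈ 𝓝 1) :
    closure U = ⊤ := by
  have hopen : IsOpen (closure U : Set G) :=
    isOpen_of_mem_nhds _ (Filter.mem_of_superset hU subset_closure)
  rw [← coe_eq_univ]
  exact IsClopen.eq_univ ⟨isClosed_of_isOpen _ hopen, hopen⟩ ⟨1, one_mem _⟩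

theorem le_closure_inter_of_isPreconnected {H : Subgroup G} (hH : IsPreconnected (H : Set G))
    {U : Set G} (hU : U ∈ 𝓝 1) : H ≤ closure ((H : Set G) ∩ U) := by
  have : PreconnectedSpace H := Subtype.preconnectedSpace hH
  have htop : closure (((↑) : H → G) ⁻¹' U) = ⊤ :=
    closure_eq_top_of_mem_nhds_one (continuous_subtype_val.continuousAt.preimage_mem_nhds hU)
  refine le_of_eq ?_
  calc H = (⊤ : Subgroup H).map H.subtype := by rw [← MonoidHom.range_eq_map, range_subtype]
    _ = closure ((H : Set G) ∩ U) := by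
      rw [← htop, MonoidHom.map_closure, coe_subtype, Set.image_preimage_eq_inter_range,
        Subtype.range_coe, Set.inter_comm]

end Subgroup

theorem stmt19_general {G : Type*} [Group G] [TopologicalSpace G] [IsTopologicalGroup G]
    [LocallyCompactSpace G]
    (Λ : Set G) (hΛ : IsApproxSubgroup Λ) (H : Subgroup G)
    (hconn : IsConnected (H : Set G))
    (K : Set G) (hK : IsCompact K) (hKsym : K⁻¹ = K)
    (h1 : Λ ⊆ K * (H : Set G)) (h2 : (H : Set G) ⊆ K * Λ) :
    ∃ K' : Set G, IsCompact K' ∧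
      Subgroup.closure (Λ * Λ ∩ K') = Subgroup.closure Λ := by
  obtain ⟨hone, hsym, -⟩ := hΛ
  obtain ⟨V₀, hV₀, hV₀1⟩ := exists_compact_mem_nhds (1 : G)
  set V := V₀ ∪ V₀⁻¹
  have hV : V⁻¹ = V := by simp only [V, Set.union_inv, inv_inv, Set.union_comm]
  have hV1 : V ∈ 𝓝 1 := Filter.mem_of_superset hV₀1 Set.subset_union_left
  have hgen : H ≤ Subgroup.closure ((H : Set G) ∩ V) :=
    Subgroup.le_closure_inter_of_isPreconnected hconn.2 hV1
  have hHV : ((H : Set G) ∩ V)⁻¹ = (H : Set G) ∩ V := by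
    rw [Set.inter_inv, hV, inv_coe_set]
  refine ⟨K * V * K ∪ K, ((hK.mul (hV₀.union hV₀.inv)).mul hK).union hK,
    le_antisymm (Subgroup.closure_mul_inter_le _ _) ?_⟩
  refine (Subgroup.closure_le_closure_mul_inter_of_commensurable hone hsym hKsym h1 h2
    Set.inter_subset_left hHV hgen).trans (Subgroup.closure_mono ?_)
  gcongr
  exact Set.inter_subset_right

theorem stmt19 {G : Type*} [Group G] [TopologicalSpace G] [IsTopologicalGroup G]
    [LocallyCompactSpace G]
    (Λ : Set G) (hΛ : IsApproxSubgroup Λ) (H : Subgroup G)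
    (hclosed : IsClosed (H : Set G)) (hconn : IsConnected (H : Set G))
    (K : Set G) (hK : IsCompact K) (hKsym : K⁻¹ = K)
    (h1 : Λ ⊆ K * (H : Set G)) (h2 : (H : Set G) ⊆ K * Λ) :
    ∃ K' : Set G, IsCompact K' ∧
      Subgroup.closure (Λ * Λ ∩ K') = Subgroup.closure Λ :=
  stmt19_general Λ hΛ H hconn K hK hKsym h1 h2
end
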